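/- arXiv:1809.10156 — 4 statements merged into one kernel-verified Lean document; each statement's English description precedes it below -/
import Mathlib

section
/- Let p be a probability distribution on a countable index set, with entries ordered non-increasingly, and let q consist of the M largest entries and r the remaining entries. Then the sum of the M largest probabilities satisfies ∑_{j=1}^M p_j ≥ 1 − (H(p) − H(q)) / (log M − log ∑_{j=1}^M p_j), where H denotes the Shannon entropy (with any fixed logarithm base). -/
/-!
Every tail entry `p j` with `j ≥ M` lies below the `M` entries `p 0, …, p (M-1)`, so
`p j ≤ S / M` with `S = ∑_{j<M} p j`. Hence `-log p j ≥ log M - log S` on the tail, and summing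
against the tail mass `1 - S` gives `H(p) - H(q) ≥ (1 - S) (log M - log S)`; dividing by
`log M - log S > 0` is the claim.
-/

open Real Finset

theorem Antitone.nsmul_le_sum_range {α : Type*} [AddCommMonoid α] [Preorder α] [AddLeftMono α]
    {f : ℕ → α} (hf : Antitone f) {n j : ℕ} (hj : n ≤ j) :
    n • f j ≤ ∑ i ∈ range n, f i := by
  simpa using card_nsmul_le_sum (range n) f (f j) fun i hi => hf (by simp at hi; omega)

theorem Real.mul_log_le_mul_log_of_le {x c : ℝ} (hx : 0 ≤ x) (hxc : x ≤ c) :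
    x * log x ≤ x * log c := by
  rcases hx.eq_or_lt with rfl | hx
  · simp
  · exact mul_le_mul_of_nonneg_left (log_le_log hx hxc) hx.le

theorem Real.tsum_mul_log_le_of_le {ι : Type*} {f : ι → ℝ} {c : ℝ} (hf : ∀ i, 0 ≤ f i)
    (hfc : ∀ i, f i ≤ c) (hs : Summable f) (hent : Summable fun i => f i * log (f i)) :
    ∑' i, f i * log (f i) ≤ (∑' i, f i) * log c := by
  rw [← tsum_mul_right]
  exact hent.tsum_le_tsum (fun i => mul_log_le_mul_log_of_le (hf i) (hfc i)) (hs.mul_right _)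

/-- For a non-increasingly ordered probability distribution `p` on ℕ
with finite Shannon entropy, the sum of the `M` largest probabilities satisfies
`∑_{j<M} p j ≥ 1 − (H(p) − H(q)) / (log M − log ∑_{j<M} p j)`,
where `q` consists of the `M` largest entries of `p`. -/
theorem lowRankApprox_first
    (p : ℕ → ℝ) (M : ℕ)
    (hM : 2 ≤ M)
    (hnn : ∀ j, 0 ≤ p j)
    (hmono : Antitone p)
    (hsum : HasSum p 1)
    (hent : Summable (fun j => p j * Real.log (p j))) :
    1 - ((-∑' j, p j * Real.log (p j)) - (-∑ j ∈ Finset.range M, p j * Real.log (p j))) /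
        (Real.log M - Real.log (∑ j ∈ Finset.range M, p j))
      ≤ ∑ j ∈ Finset.range M, p j := by
  set S := ∑ j ∈ range M, p j
  have hM_pos : (0 : ℝ) < M := by positivity
  have hp0 : 0 < p 0 := by
    by_contra! h
    have : ∑' j, p j ≤ 0 := tsum_nonpos fun j => (hmono (Nat.zero_le j)).trans h
    linarith [hsum.tsum_eq]
  have hS_pos : 0 < S := hp0.trans_le (single_le_sum (fun i _ => hnn i) (mem_range.2 (by omega)))
  have hS_le : S ≤ 1 := hsum.tsum_eq ▸ hsum.summable.sum_le_tsum _ fun i _ => hnn i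
  have hgap : 0 < log M - log S := by
    linarith [log_nonpos hS_pos.le hS_le, log_pos (by exact_mod_cast hM : (1 : ℝ) < M)]
  have htail_le (j : ℕ) : p (j + M) ≤ S / M := by
    rw [le_div_iff₀ hM_pos, mul_comm, ← nsmul_eq_mul]
    exact hmono.nsmul_le_sum_range (by omega)
  have htail_mass : ∑' j, p (j + M) = 1 - S := by
    linarith [hsum.summable.sum_add_tsum_nat_add M, hsum.tsum_eq]
  have htail_entropy := tsum_mul_log_le_of_le (fun j => hnn (j + M)) htail_le
    ((summable_nat_add_iff M).2 hsum.summable) ((summable_nat_add_iff M).2 hent)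
  rw [htail_mass, log_div hS_pos.ne' hM_pos.ne'] at htail_entropy
  rw [sub_le_comm, le_div_iff₀ hgap]
  linarith [hent.sum_add_tsum_nat_add M]
end

section
/- Let p be a probability distribution on a countable index set with finite Shannon entropy H(p), with entries ordered non-increasingly. Then for every M ≥ 2, the sum of the M largest probabilities satisfies ∑_{j=1}^M p_j ≥ 1 − H(p)/log M. -/
/-!
Let `H = ∑ -p_j log p_j`. Since `p` is non-increasing and sums to `1`, every `p_j` with `j ≥ M`
satisfies `M p_j ≤ p_0 + ⋯ + p_{M-1} ≤ 1`, so `-log p_j ≥ log M`. Hence the tail `∑_{j ≥ M} p_j`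
is at most `H / log M`.
-/

open Real

theorem Real.mul_log_le_negMulLog {x a : ℝ} (hx : 0 ≤ x) (ha : 0 < a) (hax : a * x ≤ 1) :
    x * log a ≤ negMulLog x := by
  rcases hx.eq_or_lt with rfl | hx
  · simp
  have h : x * log (a * x) ≤ 0 :=
    mul_nonpos_of_nonneg_of_nonpos hx.le (log_nonpos (by positivity) hax)
  rw [log_mul ha.ne' hx.ne'] at h
  rw [negMulLog]
  linarith

namespace Antitone

variable {p : ℕ → ℝ}

theorem nonneg_of_summable (hmono : Antitone p) (hp : Summable p) (j : ℕ) : 0 ≤ p j :=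
  hmono.le_of_tendsto hp.tendsto_atTop_zero j

theorem natCast_mul_le_of_hasSum (hmono : Antitone p) {s : ℝ} (hsum : HasSum p s) {n j : ℕ}
    (hnj : n ≤ j) : n * p j ≤ s :=
  calc (n : ℝ) * p j = ∑ _i ∈ Finset.range n, p j := by simp
    _ ≤ ∑ i ∈ Finset.range n, p i :=
      Finset.sum_le_sum fun i hi => hmono (by simp at hi; omega)
    _ ≤ s := sum_le_hasSum _ (fun i _ => hmono.nonneg_of_summable hsum.summable i) hsum

theorem tsum_nat_add_mul_log_le_tsum_negMulLog (hmono : Antitone p) (hsum : HasSum p 1)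
    (hent : Summable fun j => negMulLog (p j)) {M : ℕ} (hM : 0 < M) :
    (∑' i, p (i + M)) * log M ≤ ∑' j, negMulLog (p j) := by
  have hnn := hmono.nonneg_of_summable hsum.summable
  calc (∑' i, p (i + M)) * log M = ∑' i, p (i + M) * log M := tsum_mul_right.symm
    _ ≤ ∑' i, negMulLog (p (i + M)) :=
      Summable.tsum_le_tsum
        (fun i => mul_log_le_negMulLog (hnn _) (by exact_mod_cast hM)
          (hmono.natCast_mul_le_of_hasSum hsum (Nat.le_add_left M i)))
        (((summable_nat_add_iff M).2 hsum.summable).mul_right _)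
        ((summable_nat_add_iff M).2 hent)
    _ ≤ ∑' j, negMulLog (p j) :=
      tsum_comp_le_tsum_of_inj hent (fun j => negMulLog_nonneg (hnn j) (le_hasSum hsum j
        fun i _ => hnn i)) (add_left_injective M)

end Antitone

theorem lowRankApprox_second_general
    (p : ℕ → ℝ) (M : ℕ)
    (hM : 2 ≤ M)
    (hmono : Antitone p)
    (hsum : HasSum p 1)
    (hent : Summable (fun j => p j * Real.log (p j))) :
    1 - (-∑' j, p j * Real.log (p j)) / Real.log M ≤ ∑ j ∈ Finset.range M, p j := by
  have hlogM : 0 < log M := log_pos (by exact_mod_cast hM)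
  have htail : ∑' i, p (i + M) = 1 - ∑ j ∈ Finset.range M, p j := by
    rw [← hsum.tsum_eq, ← hsum.summable.sum_add_tsum_nat_add M]
    ring
  have hentropy : ∑' j, negMulLog (p j) = -∑' j, p j * log (p j) := by
    simp only [negMulLog, neg_mul, tsum_neg]
  have key := hmono.tsum_nat_add_mul_log_le_tsum_negMulLog hsum
    (by simpa only [negMulLog, neg_mul] using hent.neg) (by omega : 0 < M)
  rw [htail, hentropy, ← le_div_iff₀ hlogM] at key
  linarith

/-- For a non-increasingly ordered probability distribution `p` on ℕ
with finite Shannon entropy `H(p) = -∑' j, p j * log (p j)`, for every `M ≥ 2`,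
the sum of the `M` largest probabilities satisfies `∑_{j<M} p j ≥ 1 − H(p)/log M`. -/
theorem lowRankApprox_second
    (p : ℕ → ℝ) (M : ℕ)
    (hM : 2 ≤ M)
    (hnn : ∀ j, 0 ≤ p j)
    (hmono : Antitone p)
    (hsum : HasSum p 1)
    (hent : Summable (fun j => p j * Real.log (p j))) :
    1 - (-∑' j, p j * Real.log (p j)) / Real.log M ≤ ∑ j ∈ Finset.range M, p j :=
  lowRankApprox_second_general p M hM hmono hsum hent
end

section
/- Let H be a Hermitian operator on H_A ⊗ H_B, |ψ⟩ a unit vector with H|ψ⟩ = 0, and P a projector on H_A (acting as P ⊗ I) such that ⟨ψ|(P⊗I)|ψ⟩ ≥ 1 − ε for some ε ∈ (0,1). Write H = H_A + H_∂ + H_B, where H_A acts only on H_A and H_B acts only on H_B. Let ρ_A = tr_B |ψ⟩⟨ψ| and assume [ρ_A, P] = 0. Then the normalized projected state |ψ_M⟩ = (P⊗I)|ψ⟩/‖(P⊗I)|ψ⟩‖ satisfies |⟨ψ_M|H|ψ_M⟩| ≤ √(ε/(1−ε)) · ‖H_∂‖. -/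
open scoped BigOperators Kronecker Matrix InnerProductSpace

lemma aux_clm_apply {n : Type*} [Fintype n] [DecidableEq n] (M : Matrix n n ℂ)
    (x : EuclideanSpace ℂ n) (k : n) :
    (Matrix.toEuclideanCLM (𝕜 := ℂ) M) x k = ∑ j, M k j * x j := rfl

lemma aux_inner_kron {a b : Type*} [Fintype a] [Fintype b] [DecidableEq a] [DecidableEq b]
    (ψ : EuclideanSpace ℂ (a × b)) (M : Matrix a a ℂ) :
    ⟪ψ, (Matrix.toEuclideanCLM (𝕜 := ℂ) (M ⊗ₖ (1 : Matrix b b ℂ))) ψ⟫_ℂ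
      = ((Matrix.of fun i i' : a => ∑ j : b, ψ (i, j) * star (ψ (i', j))) * M).trace := by
  simp only [PiLp.inner_apply, aux_clm_apply, RCLike.inner_apply, Matrix.trace,
    Matrix.mul_apply, Matrix.of_apply, Matrix.diag_apply, Matrix.kroneckerMap_apply,
    Matrix.one_apply, Fintype.sum_prod_type, mul_ite, mul_one, mul_zero, ite_mul, zero_mul,
    Finset.sum_ite_eq', Finset.sum_ite_eq, Finset.mem_univ, if_true, Finset.mul_sum,
    Finset.sum_mul]
  conv_lhs => arg 2; ext x; rw [Finset.sum_comm]
  rw [Finset.sum_comm]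
  refine Finset.sum_congr rfl fun i _ => Finset.sum_congr rfl fun i' _ =>
    Finset.sum_congr rfl fun j _ => ?_
  simp only [RCLike.star_def]
  ring

lemma aux_trace_eq {a : Type*} [Fintype a] [DecidableEq a] (ρ P hA : Matrix a a ℂ)
    (hP2 : P * P = P) (hcomm : ρ * P = P * ρ) :
    (ρ * (P * hA)).trace = (ρ * (P * hA * P)).trace := by
  have e1 : ρ * (P * hA * P) = (ρ * (P * hA)) * P := by noncomm_ring
  have e2 : P * (ρ * (P * hA)) = ρ * (P * hA) := by
    calc P * (ρ * (P * hA)) = (P * ρ) * (P * hA) := by noncomm_ring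
    _ = (ρ * P) * (P * hA) := by rw [hcomm]
    _ = ρ * ((P * P) * hA) := by noncomm_ring
    _ = ρ * (P * hA) := by rw [hP2]
  rw [e1, Matrix.trace_mul_comm (ρ * (P * hA)) P, e2]

set_option maxHeartbeats 1000000 in
/-- Energetic bound for the projected state. Let
`H = h_A ⊗ I + H_∂ + I ⊗ h_B` be a Hermitian operator on `H_A ⊗ H_B` with
`H|ψ⟩ = 0` for a unit vector `|ψ⟩`, and let `P` be an orthogonal projector on
`H_A` with `⟨ψ|(P⊗I)|ψ⟩ ≥ 1 − ε` for some `ε ∈ (0,1)`, commuting with the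
reduced density matrix `ρ_A = tr_B |ψ⟩⟨ψ|`. Then the normalized projected
state `|ψ_M⟩ = (P⊗I)|ψ⟩/‖(P⊗I)|ψ⟩‖` satisfies
`|⟨ψ_M|H|ψ_M⟩| ≤ √(ε/(1−ε))·‖H_∂‖`. -/
theorem projected_state_energy_bound
    {a b : Type*} [Fintype a] [Fintype b] [DecidableEq a] [DecidableEq b]
    (hA : Matrix a a ℂ) (hB : Matrix b b ℂ)
    (Hbd : Matrix (a × b) (a × b) ℂ) (P : Matrix a a ℂ)
    (ψ : EuclideanSpace ℂ (a × b)) (hψ : ‖ψ‖ = 1)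
    (ε : ℝ) (hε0 : 0 < ε) (hε1 : ε < 1)
    (Htot : Matrix (a × b) (a × b) ℂ)
    (hHtot : Htot = hA ⊗ₖ (1 : Matrix b b ℂ) + Hbd + (1 : Matrix a a ℂ) ⊗ₖ hB)
    (hHerm : Htot.IsHermitian)
    (hground : (Matrix.toEuclideanCLM (𝕜 := ℂ) Htot) ψ = 0)
    (hP : P.IsHermitian) (hP2 : P * P = P)
    (hcomm :
      (Matrix.of fun i i' : a => ∑ j : b, ψ (i, j) * star (ψ (i', j))) * P
        = P * (Matrix.of fun i i' : a => ∑ j : b, ψ (i, j) * star (ψ (i', j))))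
    (hoverlap : 1 - ε ≤
      (⟪ψ, (Matrix.toEuclideanCLM (𝕜 := ℂ) (P ⊗ₖ (1 : Matrix b b ℂ))) ψ⟫_ℂ).re)
    (ψM : EuclideanSpace ℂ (a × b))
    (hψM : ψM = ‖(Matrix.toEuclideanCLM (𝕜 := ℂ) (P ⊗ₖ (1 : Matrix b b ℂ))) ψ‖⁻¹ •
        (Matrix.toEuclideanCLM (𝕜 := ℂ) (P ⊗ₖ (1 : Matrix b b ℂ))) ψ) :
    ‖⟪ψM, (Matrix.toEuclideanCLM (𝕜 := ℂ) Htot) ψM⟫_ℂ‖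
      ≤ Real.sqrt (ε / (1 - ε)) * ‖Matrix.toEuclideanCLM (𝕜 := ℂ) Hbd‖ := by
  set K : Matrix (a × b) (a × b) ℂ := P ⊗ₖ (1 : Matrix b b ℂ) with hK
  set ρ : Matrix a a ℂ := Matrix.of fun i i' : a => ∑ j : b, ψ (i, j) * star (ψ (i', j)) with hρ
  set Q : EuclideanSpace ℂ (a × b) →L[ℂ] EuclideanSpace ℂ (a × b) :=
    Matrix.toEuclideanCLM (𝕜 := ℂ) K with hQ
  set q : EuclideanSpace ℂ (a × b) := Q ψ with hq
  set δ : EuclideanSpace ℂ (a × b) := ψ - q with hδ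
  set TD : EuclideanSpace ℂ (a × b) →L[ℂ] EuclideanSpace ℂ (a × b) :=
    Matrix.toEuclideanCLM (𝕜 := ℂ) Hbd with hTD
  -- basic matrix facts
  have hKstar : star K = K := by
    rw [hK, Matrix.star_eq_conjTranspose]
    ext ⟨i, j⟩ ⟨k, l⟩
    have hPik : star (P k i) = P i k := by rw [← Matrix.conjTranspose_apply, hP]
    by_cases hjl : j = l
    · subst hjl
      simp [Matrix.conjTranspose_apply, Matrix.kroneckerMap_apply, star_mul',
        Matrix.one_apply, hPik]
    · simp [Matrix.conjTranspose_apply, Matrix.kroneckerMap_apply, star_mul',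
        Matrix.one_apply, hjl, Ne.symm hjl]
  have hK2 : K * K = K := by
    rw [hK, ← Matrix.mul_kronecker_mul, hP2, one_mul]
  have hQadj : ContinuousLinearMap.adjoint Q = Q := by
    rw [← ContinuousLinearMap.star_eq_adjoint, hQ, ← map_star, hKstar]
  have hQQ : ∀ x, Q (Q x) = Q x := fun x => by
    rw [← ContinuousLinearMap.mul_apply, hQ, ← map_mul, hK2]
  have hadj : ∀ x y, ⟪Q x, y⟫_ℂ = ⟪x, Q y⟫_ℂ := fun x y => by
    conv_lhs => rw [← hQadj]
    rw [ContinuousLinearMap.adjoint_inner_left]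
  -- norms
  have hqq : ⟪q, q⟫_ℂ = ⟪ψ, q⟫_ℂ := by rw [hq, hadj, hQQ]
  have hnq : ⟪ψ, q⟫_ℂ = ((‖q‖ : ℂ)) ^ 2 := by rw [← hqq]; exact inner_self_eq_norm_sq_to_K q
  have hq2 : 1 - ε ≤ ‖q‖ ^ 2 := by
    rw [hnq] at hoverlap
    calc 1 - ε ≤ (((‖q‖ : ℂ)) ^ 2).re := hoverlap
    _ = ‖q‖ ^ 2 := by norm_cast
  have hqpos : 0 < ‖q‖ := by nlinarith [norm_nonneg q]
  have hre : (⟪ψ, q⟫_ℂ).re = ‖q‖ ^ 2 := by rw [hnq]; norm_cast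
  have hδn : ‖δ‖ ^ 2 = 1 - ‖q‖ ^ 2 := by
    rw [hδ, @norm_sub_sq ℂ, hψ, RCLike.re_to_complex, hre]
    ring
  have hδε : ‖δ‖ ≤ Real.sqrt ε := by
    have h5 : ‖δ‖ ^ 2 ≤ ε := by rw [hδn]; linarith
    calc ‖δ‖ = Real.sqrt (‖δ‖ ^ 2) := (Real.sqrt_sq (norm_nonneg _)).symm
    _ ≤ Real.sqrt ε := Real.sqrt_le_sqrt h5
  have hqge : Real.sqrt (1 - ε) ≤ ‖q‖ := by
    calc Real.sqrt (1 - ε) ≤ Real.sqrt (‖q‖ ^ 2) := Real.sqrt_le_sqrt hq2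
    _ = ‖q‖ := Real.sqrt_sq (norm_nonneg _)
  -- the A term vanishes
  have hTA0 : ⟪q, (Matrix.toEuclideanCLM (𝕜 := ℂ) (hA ⊗ₖ (1 : Matrix b b ℂ))) δ⟫_ℂ = 0 := by
    have e1 : ∀ x, Q ((Matrix.toEuclideanCLM (𝕜 := ℂ) (hA ⊗ₖ (1 : Matrix b b ℂ))) x)
        = (Matrix.toEuclideanCLM (𝕜 := ℂ) ((P * hA) ⊗ₖ (1 : Matrix b b ℂ))) x := fun x => by
      rw [hQ, ← ContinuousLinearMap.mul_apply, ← map_mul, hK, ← Matrix.mul_kronecker_mul,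
        one_mul]
    have e2 : ∀ x, Q ((Matrix.toEuclideanCLM (𝕜 := ℂ) (hA ⊗ₖ (1 : Matrix b b ℂ))) (Q x))
        = (Matrix.toEuclideanCLM (𝕜 := ℂ) ((P * hA * P) ⊗ₖ (1 : Matrix b b ℂ))) x := fun x => by
      rw [hQ, ← ContinuousLinearMap.mul_apply, ← ContinuousLinearMap.mul_apply, ← map_mul,
        ← map_mul, hK, ← Matrix.mul_kronecker_mul, ← Matrix.mul_kronecker_mul, one_mul, mul_one]
    rw [hq, hadj, hδ, map_sub, map_sub, inner_sub_right, e1, e2 ψ, aux_inner_kron,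
      aux_inner_kron, ← hρ, ← aux_trace_eq ρ P hA hP2 hcomm, sub_self]
  -- the B term vanishes
  have hTB0 : ⟪q, (Matrix.toEuclideanCLM (𝕜 := ℂ) ((1 : Matrix a a ℂ) ⊗ₖ hB)) δ⟫_ℂ = 0 := by
    have e1 : ∀ x, Q ((Matrix.toEuclideanCLM (𝕜 := ℂ) ((1 : Matrix a a ℂ) ⊗ₖ hB)) x)
        = (Matrix.toEuclideanCLM (𝕜 := ℂ) (P ⊗ₖ hB)) x := fun x => by
      rw [hQ, ← ContinuousLinearMap.mul_apply, ← map_mul, hK, ← Matrix.mul_kronecker_mul,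
        one_mul, mul_one]
    have e2 : ∀ x, Q ((Matrix.toEuclideanCLM (𝕜 := ℂ) ((1 : Matrix a a ℂ) ⊗ₖ hB)) (Q x))
        = (Matrix.toEuclideanCLM (𝕜 := ℂ) (P ⊗ₖ hB)) x := fun x => by
      rw [hQ, ← ContinuousLinearMap.mul_apply, ← ContinuousLinearMap.mul_apply, ← map_mul,
        ← map_mul, hK, ← Matrix.mul_kronecker_mul, ← Matrix.mul_kronecker_mul, one_mul,
        mul_one, hP2, mul_one]
    rw [hq, hadj, hδ, map_sub, map_sub, inner_sub_right, e1, e2 ψ, sub_self]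
  -- main identity
  have hmain : ⟪q, (Matrix.toEuclideanCLM (𝕜 := ℂ) Htot) q⟫_ℂ = -⟪q, TD δ⟫_ℂ := by
    have hqψ : q = ψ - δ := by rw [hδ]; abel
    have hTt : (Matrix.toEuclideanCLM (𝕜 := ℂ) Htot) q
        = -((Matrix.toEuclideanCLM (𝕜 := ℂ) Htot) δ) := by
      conv_lhs => rw [hqψ]
      rw [map_sub, hground, zero_sub]
    rw [hTt, inner_neg_right, hHtot, map_add, map_add]
    rw [ContinuousLinearMap.add_apply, ContinuousLinearMap.add_apply, inner_add_right,
      inner_add_right, hTA0, hTB0, ← hTD]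
    ring
  have hbound : ‖⟪q, (Matrix.toEuclideanCLM (𝕜 := ℂ) Htot) q⟫_ℂ‖ ≤ ‖q‖ * (‖TD‖ * ‖δ‖) := by
    rw [hmain, norm_neg]
    calc ‖⟪q, TD δ⟫_ℂ‖ ≤ ‖q‖ * ‖TD δ‖ := norm_inner_le_norm _ _
    _ ≤ ‖q‖ * (‖TD‖ * ‖δ‖) := by
        exact mul_le_mul_of_nonneg_left (TD.le_opNorm δ) (norm_nonneg q)
  -- conclusion
  rw [hψM, RCLike.real_smul_eq_coe_smul (K := ℂ), inner_smul_left, map_smul, inner_smul_right,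
    norm_mul, norm_mul, RCLike.norm_conj, RCLike.norm_ofReal, abs_of_nonneg
      (inv_nonneg.2 (norm_nonneg q))]
  have key : ∀ x y : ℝ, ‖q‖⁻¹ * (‖q‖⁻¹ * (‖q‖ * (x * y))) = x * (y / ‖q‖) := fun x y => by
    field_simp
  have hfrac : ‖δ‖ / ‖q‖ ≤ Real.sqrt ε / Real.sqrt (1 - ε) :=
    div_le_div₀ (Real.sqrt_nonneg ε) hδε (Real.sqrt_pos.2 (by linarith)) hqge
  calc ‖q‖⁻¹ * (‖q‖⁻¹ * ‖⟪q, (Matrix.toEuclideanCLM (𝕜 := ℂ) Htot) q⟫_ℂ‖)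
      ≤ ‖q‖⁻¹ * (‖q‖⁻¹ * (‖q‖ * (‖TD‖ * ‖δ‖))) := by
        have h6 : (0:ℝ) ≤ ‖q‖⁻¹ := inv_nonneg.2 (norm_nonneg q)
        exact mul_le_mul_of_nonneg_left (mul_le_mul_of_nonneg_left hbound h6) h6
    _ = ‖TD‖ * (‖δ‖ / ‖q‖) := key _ _
    _ ≤ ‖TD‖ * (Real.sqrt ε / Real.sqrt (1 - ε)) :=
        mul_le_mul_of_nonneg_left hfrac (norm_nonneg TD)
    _ = Real.sqrt (ε / (1 - ε)) * ‖TD‖ := by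
        rw [Real.sqrt_div hε0.le, mul_comm]
end

section
/- Symplectic eigenvalue interlacing: let A ∈ ℝ^{2n×2n} be positive definite, partitioned into four n×n blocks A_{11}, A_{12}, A_{21}, A_{22}, and let B ∈ ℝ^{(2n−2)×(2n−2)} be obtained by deleting, for some 1 ≤ i ≤ n, the i-th and (n+i)-th rows and columns of A. Then the non-decreasingly ordered symplectic eigenvalues satisfy d_j^↑(A) ≤ d_j^↑(B) ≤ d_{j+2}^↑(A) for 1 ≤ j ≤ n−1, with the convention d_{n+1}^↑(A) = ∞. -/
/-!
Over `ℂ` the matrix `iJ` is Hermitian. If `S M Sᵀ = diag(d, d)` with `S` symplectic, then in the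
basis `Sᵀ Q`, `Q = [[1, 1], [-i, i]]`, the Hermitian pencil `M + t·iJ` becomes
`diag(2(d - t), 2(d + t))`. So for `0 < d₁ ≤ ⋯ ≤ dₘ` its form at `t = d_k` is `≤ 0` on a
`(k+1)`-dimensional subspace and `≥ 0` on a `(2m-k)`-dimensional one.

Deleting the coordinates `i` and `n+1+i` turns `A` into `B` and `J` into `J`, so the pencil of `B`
is a restriction of the pencil of `A`. A subspace for `B`, embedded, and one for `A` whose
dimensions add up to `2n+3 > 2n+2` share some `z ≠ 0`. Since `zᴴAz > 0`, the condition
`zᴴ(A + β·iJ)z ≤ 0` with `β > 0` forces `zᴴ(iJ)z < 0`, and then `zᴴ(A + α·iJ)z ≥ 0`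
gives `α ≤ β`.
-/

open scoped Matrix
open Matrix Complex

/-- `d : Fin n → ℝ` is a (Williamson) symplectic spectrum of a matrix
`M : Matrix (Fin n ⊕ Fin n) (Fin n ⊕ Fin n) ℝ` if there is a symplectic matrix
`S` with `S M Sᵀ = diag(d₁,…,dₙ,d₁,…,dₙ)`. -/
def IsSymplecticSpectrum {n : ℕ}
    (M : Matrix (Fin n ⊕ Fin n) (Fin n ⊕ Fin n) ℝ) (d : Fin n → ℝ) : Prop :=
  ∃ S ∈ Matrix.symplecticGroup (Fin n) ℝ,
    S * M * Sᵀ = Matrix.diagonal (Sum.elim d d)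

theorem Submodule.exists_ne_zero_mem_inf_of_finrank_lt_add {K V : Type*} [DivisionRing K]
    [AddCommGroup V] [Module K V] [FiniteDimensional K V] {s t : Submodule K V}
    (h : Module.finrank K V < Module.finrank K s + Module.finrank K t) :
    ∃ z ∈ s ⊓ t, z ≠ 0 := by
  by_contra! hst
  have hdisj : Disjoint s t := disjoint_iff.mpr ((Submodule.eq_bot_iff _).mpr hst)
  exact (Submodule.finrank_add_finrank_le_of_disjoint hdisj).not_gt h

lemma mulVec_submatrix_injective {ι κ η R : Type*} [CommRing R] [Fintype κ] [Fintype η]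
    {E : Matrix ι η R} (hE : Function.Injective E.mulVec) {g : κ → η}
    (hg : Function.Injective g) : Function.Injective (E.submatrix id g).mulVec :=
  mulVec_injective_iff.mpr ((mulVec_injective_iff.mp hE).comp g hg)

section HermForm

variable {ι κ η : Type*} [Fintype ι]

noncomputable def hermForm (M : Matrix ι ι ℂ) (z : ι → ℂ) : ℝ :=
  (star z ⬝ᵥ M *ᵥ z).re

lemma hermForm_add (M N : Matrix ι ι ℂ) (z : ι → ℂ) :
    hermForm (M + N) z = hermForm M z + hermForm N z := by
  simp [hermForm, add_mulVec, dotProduct_add]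

lemma hermForm_ofReal_smul (t : ℝ) (M : Matrix ι ι ℂ) (z : ι → ℂ) :
    hermForm ((t : ℂ) • M) z = t * hermForm M z := by
  simp [hermForm, smul_mulVec, dotProduct_smul]

lemma hermForm_mulVec [Fintype κ] (M : Matrix ι ι ℂ) (E : Matrix ι κ ℂ) (y : κ → ℂ) :
    hermForm M (E *ᵥ y) = hermForm (Eᴴ * M * E) y := by
  rw [hermForm, hermForm, star_mulVec, dotProduct_mulVec, vecMul_vecMul, ← dotProduct_mulVec,
    mulVec_mulVec]

lemma hermForm_diagonal [DecidableEq ι] (w : ι → ℝ) (z : ι → ℂ) :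
    hermForm (diagonal fun l => (w l : ℂ)) z = ∑ l, w l * normSq (z l) := by
  simp [hermForm, dotProduct, mulVec_diagonal, Complex.mul_re, normSq_apply, mul_left_comm]

lemma Matrix.PosDef.hermForm_map_ofReal_pos {M : Matrix ι ι ℝ} (hM : M.PosDef) {z : ι → ℂ}
    (hz : z ≠ 0) : 0 < hermForm (M.map (↑)) z := by
  set x : ι → ℝ := fun l => (z l).re
  set y : ι → ℝ := fun l => (z l).im
  have hsplit : hermForm (M.map (↑)) z = x ⬝ᵥ M *ᵥ x + y ⬝ᵥ M *ᵥ y := by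
    simp [x, y, hermForm, dotProduct, mulVec, Complex.mul_re, Finset.mul_sum,
      Finset.sum_add_distrib]
  have hx := hM.posSemidef.dotProduct_mulVec_nonneg x
  have hy := hM.posSemidef.dotProduct_mulVec_nonneg y
  simp only [star_trivial] at hx hy
  rw [hsplit]
  rcases eq_or_ne x 0 with hx0 | hx0
  · have hy0 : y ≠ 0 := fun hy0 =>
      hz (funext fun l => Complex.ext (congrFun hx0 l) (congrFun hy0 l))
    simpa using add_pos_of_nonneg_of_pos hx (hM.dotProduct_mulVec_pos hy0)
  · simpa using add_pos_of_pos_of_nonneg (hM.dotProduct_mulVec_pos hx0) hy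

lemma submatrix_conjTranspose_mul_mul_submatrix (E : Matrix ι η ℂ) (M : Matrix ι ι ℂ)
    (g : κ → η) :
    (E.submatrix id g)ᴴ * M * E.submatrix id g = (Eᴴ * M * E).submatrix g g := by
  ext
  simp [mul_apply, conjTranspose_apply]

lemma hermForm_one_submatrix_mulVec [Fintype κ] [DecidableEq ι] (P : Matrix ι ι ℂ)
    (f : κ → ι) (x : κ → ℂ) :
    hermForm P ((1 : Matrix ι ι ℂ).submatrix id f *ᵥ x) = hermForm (P.submatrix f f) x := by
  rw [hermForm_mulVec, submatrix_conjTranspose_mul_mul_submatrix, conjTranspose_one, one_mul,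
    mul_one]

lemma exists_subspace_hermForm_eq_sum [Fintype κ] [DecidableEq ι] {P E : Matrix ι ι ℂ}
    (hE : Function.Injective E.mulVec) {w : ι → ℝ}
    (hP : Eᴴ * P * E = diagonal fun k => (w k : ℂ)) {g : κ → ι}
    (hg : Function.Injective g) :
    ∃ W : Submodule ℂ (ι → ℂ), Module.finrank ℂ W = Fintype.card κ ∧
      ∀ z ∈ W, ∃ y : κ → ℂ, hermForm P z = ∑ a, w (g a) * normSq (y a) := by
  classical
  refine ⟨LinearMap.range (E.submatrix id g).mulVecLin, ?_, ?_⟩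
  · have hEg := mulVec_submatrix_injective hE hg
    rw [← coe_mulVecLin] at hEg
    rw [LinearMap.finrank_range_of_inj hEg, Module.finrank_fintype_fun_eq_card]
  · rintro _ ⟨y, rfl⟩
    refine ⟨y, ?_⟩
    rw [mulVecLin_apply, hermForm_mulVec, submatrix_conjTranspose_mul_mul_submatrix, hP,
      submatrix_diagonal _ _ hg]
    exact hermForm_diagonal (w ∘ g) y

end HermForm

section Pencil

variable {l l' : Type*} [DecidableEq l] [DecidableEq l']

lemma J_submatrix_sumMap {g : l' → l} (hg : Function.Injective g) (R : Type*) [CommRing R] :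
    (J l R).submatrix (Sum.map g g) (Sum.map g g) = J l' R := by
  ext (a | a) (b | b) <;> simp [J, one_apply, hg.eq_iff]

noncomputable def symplecticPencil (M : Matrix (l ⊕ l) (l ⊕ l) ℝ) (t : ℝ) :
    Matrix (l ⊕ l) (l ⊕ l) ℂ :=
  M.map (↑) + (t : ℂ) • I • J l ℂ

lemma symplecticPencil_submatrix {g : l' → l} (hg : Function.Injective g)
    (M : Matrix (l ⊕ l) (l ⊕ l) ℝ) (t : ℝ) :
    (symplecticPencil M t).submatrix (Sum.map g g) (Sum.map g g)
      = symplecticPencil (M.submatrix (Sum.map g g) (Sum.map g g)) t := by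
  rw [symplecticPencil, symplecticPencil, ← J_submatrix_sumMap hg ℂ]
  rfl

variable [Fintype l]

lemma exists_finrank_eq_hermForm_symplecticPencil_submatrix [Fintype l'] {g : l' → l}
    (hg : Function.Injective g) (M : Matrix (l ⊕ l) (l ⊕ l) ℝ) (t : ℝ)
    (W : Submodule ℂ (l' ⊕ l' → ℂ)) :
    ∃ W' : Submodule ℂ (l ⊕ l → ℂ), Module.finrank ℂ W' = Module.finrank ℂ W ∧
      ∀ z ∈ W', ∃ x ∈ W, hermForm (symplecticPencil M t) z
        = hermForm (symplecticPencil (M.submatrix (Sum.map g g) (Sum.map g g)) t) x := by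
  set Φ := ((1 : Matrix (l ⊕ l) (l ⊕ l) ℂ).submatrix id (Sum.map g g)).mulVecLin
  have hΦ : Function.Injective Φ := by
    rw [coe_mulVecLin]
    exact mulVec_submatrix_injective (fun x y h => by simpa using h) (hg.sumMap hg)
  refine ⟨W.map Φ, (LinearEquiv.finrank_eq (Submodule.equivMapOfInjective Φ hΦ W)).symm, ?_⟩
  rintro _ ⟨x, hx, rfl⟩
  refine ⟨x, hx, ?_⟩
  rw [mulVecLin_apply, hermForm_one_submatrix_mulVec, symplecticPencil_submatrix hg]

lemma hermForm_symplecticPencil (M : Matrix (l ⊕ l) (l ⊕ l) ℝ) (t : ℝ)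
    (z : l ⊕ l → ℂ) :
    hermForm (symplecticPencil M t) z
      = hermForm (M.map (↑)) z + t * hermForm (I • J l ℂ) z := by
  rw [symplecticPencil, hermForm_add, hermForm_ofReal_smul]

lemma le_of_symplecticPencil_nonpos_of_nonneg {M : Matrix (l ⊕ l) (l ⊕ l) ℝ} (hM : M.PosDef)
    {α β : ℝ} (hβ : 0 < β) {V U : Submodule ℂ (l ⊕ l → ℂ)}
    (hdim : Fintype.card (l ⊕ l) < Module.finrank ℂ V + Module.finrank ℂ U)
    (hV : ∀ z ∈ V, hermForm (symplecticPencil M β) z ≤ 0)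
    (hU : ∀ z ∈ U, 0 ≤ hermForm (symplecticPencil M α) z) : α ≤ β := by
  rw [← Module.finrank_fintype_fun_eq_card ℂ] at hdim
  obtain ⟨z, ⟨hzV, hzU⟩, hz⟩ := Submodule.exists_ne_zero_mem_inf_of_finrank_lt_add hdim
  have hq := hM.hermForm_map_ofReal_pos hz
  have hβz := hV z hzV
  have hαz := hU z hzU
  rw [hermForm_symplecticPencil] at hβz hαz
  have hJ : hermForm (I • J l ℂ) z < 0 := neg_of_mul_neg_right (by linarith) hβ.le
  nlinarith

def pencilWeights (d : l → ℝ) (t : ℝ) : l ⊕ l → ℝ :=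
  Sum.elim (fun a => 2 * (d a - t)) (fun a => 2 * (d a + t))

/-- Its columns `eₐ ∓ i fₐ` are eigenvectors of `iJ` for the eigenvalues `∓1`. -/
noncomputable def iJEigenbasis (l : Type*) [DecidableEq l] : Matrix (l ⊕ l) (l ⊕ l) ℂ :=
  fromBlocks 1 1 (-I • 1) (I • 1)

lemma iJEigenbasis_conj (d : l → ℝ) (t : ℝ) :
    (iJEigenbasis l)ᴴ * ((diagonal (Sum.elim d d)).map (↑) + (t : ℂ) • I • J l ℂ) *
        iJEigenbasis l
      = diagonal fun k => (pencilWeights d t k : ℂ) := by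
  rw [iJEigenbasis, J, ← fromBlocks_diagonal, fromBlocks_map, fromBlocks_smul, fromBlocks_smul,
    fromBlocks_add, fromBlocks_conjTranspose, fromBlocks_multiply, fromBlocks_multiply]
  ext (a | a) (b | b) <;>
    simp [pencilWeights, diagonal_apply, one_apply, smul_smul, mul_assoc, I_mul_I] <;>
    split_ifs <;> ring_nf <;> rw [I_sq] <;> ring

lemma iJEigenbasis_conjTranspose_mul_self :
    (iJEigenbasis l)ᴴ * iJEigenbasis l = (2 : ℂ) • 1 := by
  rw [iJEigenbasis, fromBlocks_conjTranspose, fromBlocks_multiply, ← fromBlocks_one,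
    fromBlocks_smul]
  simp [smul_smul, two_smul]

noncomputable def williamsonBasis (S : Matrix (l ⊕ l) (l ⊕ l) ℝ) :
    Matrix (l ⊕ l) (l ⊕ l) ℂ :=
  Sᵀ.map (↑) * iJEigenbasis l

lemma williamsonBasis_conj_symplecticPencil {S M : Matrix (l ⊕ l) (l ⊕ l) ℝ} {d : l → ℝ}
    (hS : S ∈ symplecticGroup l ℝ) (hSM : S * M * Sᵀ = diagonal (Sum.elim d d)) (t : ℝ) :
    (williamsonBasis S)ᴴ * symplecticPencil M t * williamsonBasis S
      = diagonal fun k => (pencilWeights d t k : ℂ) := by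
  have hc : (⇑ofRealHom : ℝ → ℂ) = (↑) := rfl
  have hSJ := SymplecticGroup.mem_iff.mp (SymplecticGroup.map_mem hS ofRealHom)
  have hSM' : (S * M * Sᵀ).map ofRealHom = _ := congrArg (·.map ofRealHom) hSM
  rw [Matrix.map_mul, Matrix.map_mul] at hSM'
  simp only [← transpose_map, hc] at hSJ hSM'
  have hS' : (Sᵀ.map ((↑) : ℝ → ℂ))ᴴ = S.map (↑) := by
    ext
    simp [conjTranspose_apply]
  rw [williamsonBasis, conjTranspose_mul, hS', ← iJEigenbasis_conj d t, ← hSM', ← hSJ,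
    symplecticPencil]
  simp only [Matrix.mul_add, Matrix.add_mul, Matrix.mul_smul, Matrix.smul_mul, Matrix.mul_assoc]

lemma mulVec_williamsonBasis_injective {S : Matrix (l ⊕ l) (l ⊕ l) ℝ}
    (hS : S ∈ symplecticGroup l ℝ) : Function.Injective (williamsonBasis S).mulVec := by
  have hQ : ((2 : ℂ)⁻¹ • (iJEigenbasis l)ᴴ) * iJEigenbasis l = 1 := by
    rw [Matrix.smul_mul, iJEigenbasis_conjTranspose_mul_self, smul_smul,
      inv_mul_cancel₀ two_ne_zero, one_smul]
  have hSc : Sᵀ.map ofRealHom ∈ symplecticGroup l ℂ :=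
    SymplecticGroup.map_mem (SymplecticGroup.transpose_mem hS) _
  rw [mulVec_injective_iff_isUnit]
  exact ((isUnit_iff_isUnit_det _).mpr (SymplecticGroup.symplectic_det hSc)).mul
    ((isUnit_iff_isUnit_det _).mpr (isUnit_det_of_left_inverse hQ))

end Pencil

namespace IsSymplecticSpectrum

variable {m : ℕ} {M : Matrix (Fin m ⊕ Fin m) (Fin m ⊕ Fin m) ℝ} {d : Fin m → ℝ}

lemma pos (h : IsSymplecticSpectrum M d) (hM : M.PosDef) (a : Fin m) : 0 < d a := by
  obtain ⟨S, hS, hSM⟩ := h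
  have hSu : IsUnit S := (isUnit_iff_isUnit_det S).mpr (SymplecticGroup.symplectic_det hS)
  have hD := hM.mul_mul_conjTranspose_same (vecMul_injective_iff_isUnit.mpr hSu)
  rw [conjTranspose_eq_transpose_of_trivial, hSM] at hD
  simpa using posDef_diagonal_iff.mp hD (Sum.inl a)

lemma exists_symplecticPencil_nonpos (h : IsSymplecticSpectrum M d) (hd : Monotone d)
    (k : Fin m) :
    ∃ V : Submodule ℂ (Fin m ⊕ Fin m → ℂ), Module.finrank ℂ V = k + 1 ∧
      ∀ z ∈ V, hermForm (symplecticPencil M (d k)) z ≤ 0 := by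
  obtain ⟨S, hS, hSM⟩ := h
  obtain ⟨V, hV, hsum⟩ := exists_subspace_hermForm_eq_sum (mulVec_williamsonBasis_injective hS)
    (williamsonBasis_conj_symplecticPencil hS hSM (d k))
    (g := fun a : Finset.Iic k => Sum.inl a.1) (Sum.inl_injective.comp Subtype.val_injective)
  refine ⟨V, by rw [hV, Fintype.card_coe, Fin.card_Iic], fun z hz => ?_⟩
  obtain ⟨y, hy⟩ := hsum z hz
  rw [hy]
  refine Finset.sum_nonpos fun a _ => mul_nonpos_of_nonpos_of_nonneg ?_ (normSq_nonneg _)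
  have := hd (Finset.mem_Iic.mp a.2)
  simp only [pencilWeights, Sum.elim_inl]
  linarith

lemma exists_symplecticPencil_nonneg (h : IsSymplecticSpectrum M d) (hM : M.PosDef)
    (hd : Monotone d) (k : Fin m) :
    ∃ U : Submodule ℂ (Fin m ⊕ Fin m → ℂ), Module.finrank ℂ U = 2 * m - k ∧
      ∀ z ∈ U, 0 ≤ hermForm (symplecticPencil M (d k)) z := by
  have hpos := h.pos hM
  obtain ⟨S, hS, hSM⟩ := h
  obtain ⟨U, hU, hsum⟩ := exists_subspace_hermForm_eq_sum (mulVec_williamsonBasis_injective hS)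
    (williamsonBasis_conj_symplecticPencil hS hSM (d k))
    (g := Sum.map (fun a : Finset.Ici k => a.1) id)
    (Subtype.val_injective.sumMap Function.injective_id)
  refine ⟨U, ?_, fun z hz => ?_⟩
  · rw [hU, Fintype.card_sum, Fintype.card_coe, Fin.card_Ici, Fintype.card_fin]
    omega
  obtain ⟨y, hy⟩ := hsum z hz
  rw [hy]
  refine Finset.sum_nonneg fun a _ => mul_nonneg ?_ (normSq_nonneg _)
  rcases a with a | a
  · have := hd (Finset.mem_Ici.mp a.2)
    simp only [pencilWeights, Sum.map_inl, Sum.elim_inl]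
    linarith
  · have := hpos a
    have := hpos k
    simp only [pencilWeights, Sum.map_inr, Sum.elim_inr, id]
    linarith

end IsSymplecticSpectrum

/-- Symplectic eigenvalue interlacing. Let
`A ∈ ℝ^{2(n+1) × 2(n+1)}` be positive definite, and let `B` be obtained by
deleting, for some index `i`, the `i`-th row/column in each of the four
`(n+1) × (n+1)` blocks of `A` (i.e. the `i`-th and `(n+1+i)`-th rows and
columns of `A`). If `d` and `e` are the non-decreasingly ordered symplectic
eigenvalues of `A` and `B` respectively, then for all `j`:
`d_j(A) ≤ d_j(B)` and, whenever `j+2` is a valid index, `d_j(B) ≤ d_{j+2}(A)`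
(the convention `d_{n+1}(A) = ∞` corresponds to no constraint otherwise). -/
theorem symplectic_eigenvalue_interlacing {n : ℕ}
    (A : Matrix (Fin (n + 1) ⊕ Fin (n + 1)) (Fin (n + 1) ⊕ Fin (n + 1)) ℝ)
    (hA : A.PosDef) (i : Fin (n + 1))
    (B : Matrix (Fin n ⊕ Fin n) (Fin n ⊕ Fin n) ℝ)
    (hB : B = A.submatrix (Sum.map i.succAbove i.succAbove)
                          (Sum.map i.succAbove i.succAbove))
    (d : Fin (n + 1) → ℝ) (e : Fin n → ℝ)
    (hd : IsSymplecticSpectrum A d) (hdmono : Monotone d)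
    (he : IsSymplecticSpectrum B e) (hemono : Monotone e) :
    ∀ j : Fin n, d j.castSucc ≤ e j ∧
      ∀ hj : (j : ℕ) + 2 < n + 1, e j ≤ d ⟨(j : ℕ) + 2, hj⟩ := by
  intro j
  have hi : Function.Injective i.succAbove := Fin.succAbove_right_injective
  have hBpos : B.PosDef := hB ▸ hA.submatrix (hi.sumMap hi)
  have hcard : Fintype.card (Fin (n + 1) ⊕ Fin (n + 1)) = 2 * n + 2 := by
    rw [Fintype.card_sum, Fintype.card_fin]
    ring
  refine ⟨?_, fun hj => ?_⟩
  · obtain ⟨V, hVdim, hV⟩ := he.exists_symplecticPencil_nonpos hemono j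
    obtain ⟨V', hV'dim, hV'⟩ := exists_finrank_eq_hermForm_symplecticPencil_submatrix
      hi A (e j) V
    obtain ⟨U, hUdim, hU⟩ := hd.exists_symplecticPencil_nonneg hA hdmono j.castSucc
    refine le_of_symplecticPencil_nonpos_of_nonneg hA (he.pos hBpos j) (V := V') ?_
      (fun z hz => ?_) hU
    · rw [hcard, hV'dim, hVdim, hUdim, Fin.val_castSucc]
      omega
    · obtain ⟨x, hx, hzx⟩ := hV' z hz
      rw [hzx, ← hB]
      exact hV x hx
  · obtain ⟨V, hVdim, hV⟩ := hd.exists_symplecticPencil_nonpos hdmono ⟨j + 2, hj⟩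
    obtain ⟨U, hUdim, hU⟩ := he.exists_symplecticPencil_nonneg hBpos hemono j
    obtain ⟨U', hU'dim, hU'⟩ := exists_finrank_eq_hermForm_symplecticPencil_submatrix
      hi A (e j) U
    refine le_of_symplecticPencil_nonpos_of_nonneg hA (hd.pos hA _) (U := U') ?_ hV
      (fun z hz => ?_)
    · rw [hcard, hU'dim, hVdim, hUdim, Fin.val_mk]
      omega
    · obtain ⟨x, hx, hzx⟩ := hU' z hz
      rw [hzx, ← hB]
      exact hU x hx
end
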